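/- Let A ∈ ℂ^{N×N} be positive semidefinite and let v = (v_0,…,v_{N−1})^T ∈ ℂ^N. Then det(A ⋄ v v*) = |v_0|^{2N} · det A, where ⋄ denotes the Jury product. -/

import Mathlib

open Finset Matrix ComplexOrder

/-- The Jury product of two `N × N` complex matrices (indices `0, …, N-1`):
`(A ⋄ B)_{jk} = ∑_{m=0}^{j} ∑_{n=0}^{k} a_{m,n} b_{j-m,k-n}`. -/
noncomputable def jury {N : ℕ} (A B : Matrix (Fin N) (Fin N) ℂ) :
    Matrix (Fin N) (Fin N) ℂ :=
  Matrix.of fun j k => ∑ m ∈ Finset.Iic j, ∑ n ∈ Finset.Iic k, A m n * B (j - m) (k - n)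

/-! `A ⋄ v v* = T A T*` for the lower triangular Toeplitz matrix `T` with first column `v`,
whose diagonal is constantly `v₀`. Taking determinants gives the claim. -/

def lowerToeplitz {R : Type*} [Zero R] {N : ℕ} (v : Fin N → R) : Matrix (Fin N) (Fin N) R :=
  Matrix.of fun j m => if m ≤ j then v (j - m) else 0

theorem det_lowerToeplitz {R : Type*} [CommRing R] {N : ℕ} [NeZero N] (v : Fin N → R) :
    (lowerToeplitz v).det = v 0 ^ N := by
  rw [det_of_isLowerTriangular (lowerToeplitz v) fun j m hjm => if_neg (not_le.mpr hjm)]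
  simp [lowerToeplitz]

theorem sum_Iic_eq_sum_ite {α M : Type*} [LinearOrder α] [Fintype α] [LocallyFiniteOrderBot α]
    [AddCommMonoid M] (f : α → M) (j : α) :
    ∑ m ∈ Iic j, f m = ∑ m, if m ≤ j then f m else 0 := by
  rw [← sum_filter, filter_ge_eq_Iic]

theorem jury_vecMulVec_star {N : ℕ} (A : Matrix (Fin N) (Fin N) ℂ) (v : Fin N → ℂ) :
    jury A (vecMulVec v (star v)) = lowerToeplitz v * A * (lowerToeplitz v)ᴴ := by
  ext j k
  simp only [jury, of_apply, mul_apply, conjTranspose_apply, vecMulVec_apply, Pi.star_apply,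
    sum_mul]
  rw [sum_comm (γ := Fin N), sum_Iic_eq_sum_ite]
  refine sum_congr rfl fun m _ => ?_
  by_cases hm : m ≤ k
  · rw [if_pos hm, sum_Iic_eq_sum_ite]
    refine sum_congr rfl fun n _ => ?_
    by_cases hn : n ≤ j
    · simp only [if_pos hn, lowerToeplitz, of_apply, if_pos hm]
      ring
    · simp [hn, lowerToeplitz]
  · simp [hm, lowerToeplitz]

theorem jury_det_rank_one_general {N : ℕ} [NeZero N] (A : Matrix (Fin N) (Fin N) ℂ)
    (v : Fin N → ℂ) :
    (jury A (Matrix.vecMulVec v (star v))).det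
      = ((‖v 0‖ : ℝ) : ℂ) ^ (2 * N) * A.det := by
  have hnorm : ((‖v 0‖ : ℝ) : ℂ) ^ (2 * N) = v 0 ^ N * star (v 0 ^ N) := by
    rw [star_pow, ← mul_pow, pow_mul]
    exact congrArg (· ^ N) (Complex.mul_conj' (v 0)).symm
  rw [jury_vecMulVec_star, det_mul, det_mul, det_conjTranspose, det_lowerToeplitz, hnorm]
  ring

/-- For positive semidefinite `A ∈ ℂ^{N×N}` and `v ∈ ℂ^N`,
`det (A ⋄ v v*) = |v₀|^{2N} det A`. -/
theorem jury_det_rank_one {N : ℕ} [NeZero N] (A : Matrix (Fin N) (Fin N) ℂ)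
    (hA : A.PosSemidef) (v : Fin N → ℂ) :
    (jury A (Matrix.vecMulVec v (star v))).det
      = ((‖v 0‖ : ℝ) : ℂ) ^ (2 * N) * A.det :=
  jury_det_rank_one_general A v
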